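/- For any real n×p matrix Ω₁, any q×n matrix Ω₂, any p×q matrix M with MᵀM ≤ I (in the Loewner order), any scalar ε > 0, and any vector x ∈ ℝⁿ, we have xᵀΩ₁MΩ₂x + xᵀΩ₂ᵀMᵀΩ₁ᵀx ≤ ε·xᵀΩ₁Ω₁ᵀx + ε⁻¹·xᵀΩ₂ᵀΩ₂x. -/

import Mathlib

open Matrix
/-- Petersen's lemma: for `MᵀM ≤ I` (Loewner order) and `ε > 0`,
`xᵀΩ₁MΩ₂x + xᵀΩ₂ᵀMᵀΩ₁ᵀx ≤ ε·xᵀΩ₁Ω₁ᵀx + ε⁻¹·xᵀΩ₂ᵀΩ₂x`. -/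
theorem petersen_lemma {n p q : ℕ}
    (Ω₁ : Matrix (Fin n) (Fin p) ℝ) (Ω₂ : Matrix (Fin q) (Fin n) ℝ)
    (M : Matrix (Fin p) (Fin q) ℝ) (hM : (1 - Mᵀ * M).PosSemidef)
    (ε : ℝ) (hε : 0 < ε) (x : Fin n → ℝ) :
    x ⬝ᵥ (Ω₁ * M * Ω₂).mulVec x + x ⬝ᵥ (Ω₂ᵀ * Mᵀ * Ω₁ᵀ).mulVec x ≤
      ε * (x ⬝ᵥ (Ω₁ * Ω₁ᵀ).mulVec x) + ε⁻¹ * (x ⬝ᵥ (Ω₂ᵀ * Ω₂).mulVec x) := by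
  set a : Fin p → ℝ := Ω₁ᵀ.mulVec x with ha
  set b : Fin q → ℝ := Ω₂.mulVec x with hb
  set c : Fin p → ℝ := M.mulVec b with hc
  have h1 : x ⬝ᵥ (Ω₁ * M * Ω₂).mulVec x = a ⬝ᵥ c := by
    rw [ha, hc, hb, ← mulVec_mulVec, ← mulVec_mulVec, dotProduct_mulVec,
      ← mulVec_transpose]
  have h2 : x ⬝ᵥ (Ω₂ᵀ * Mᵀ * Ω₁ᵀ).mulVec x = c ⬝ᵥ a := by
    rw [ha, hc, hb, ← mulVec_mulVec, ← mulVec_mulVec, dotProduct_mulVec,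
      ← mulVec_transpose, transpose_transpose, dotProduct_mulVec,
      ← mulVec_transpose, transpose_transpose]
  have h3 : x ⬝ᵥ (Ω₁ * Ω₁ᵀ).mulVec x = a ⬝ᵥ a := by
    rw [ha, ← mulVec_mulVec, dotProduct_mulVec, ← mulVec_transpose]
  have h4 : x ⬝ᵥ (Ω₂ᵀ * Ω₂).mulVec x = b ⬝ᵥ b := by
    rw [hb, ← mulVec_mulVec, dotProduct_mulVec, ← mulVec_transpose,
      transpose_transpose]
  have hcc : c ⬝ᵥ c ≤ b ⬝ᵥ b := by
    have h := hM.dotProduct_mulVec_nonneg b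
    simp only [star_trivial, sub_mulVec, one_mulVec, dotProduct_sub] at h
    have hbc : b ⬝ᵥ (Mᵀ * M).mulVec b = c ⬝ᵥ c := by
      rw [hc, ← mulVec_mulVec, dotProduct_mulVec, ← mulVec_transpose,
        transpose_transpose]
    rw [hbc] at h
    linarith
  have hsq : 0 ≤ (ε • a - c) ⬝ᵥ (ε • a - c) :=
    Finset.sum_nonneg fun i _ => mul_self_nonneg _
  have hexp : (ε • a - c) ⬝ᵥ (ε • a - c)
      = ε * ε * (a ⬝ᵥ a) - ε * (a ⬝ᵥ c) - ε * (c ⬝ᵥ a) + c ⬝ᵥ c := by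
    simp [sub_dotProduct, dotProduct_sub, smul_dotProduct, dotProduct_smul,
      smul_eq_mul]
    ring
  have hca : c ⬝ᵥ a = a ⬝ᵥ c := dotProduct_comm _ _
  rw [h1, h2, h3, h4, hca]
  have key : a ⬝ᵥ c + a ⬝ᵥ c ≤ ε * (a ⬝ᵥ a) + ε⁻¹ * (c ⬝ᵥ c) := by
    rw [← sub_nonneg]
    have heq : ε * (a ⬝ᵥ a) + ε⁻¹ * (c ⬝ᵥ c) - (a ⬝ᵥ c + a ⬝ᵥ c)
        = ε⁻¹ * ((ε • a - c) ⬝ᵥ (ε • a - c)) := by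
      rw [hexp, hca]
      field_simp
      ring
    rw [heq]
    exact mul_nonneg (inv_nonneg.mpr hε.le) hsq
  have h5 : ε⁻¹ * (c ⬝ᵥ c) ≤ ε⁻¹ * (b ⬝ᵥ b) :=
    mul_le_mul_of_nonneg_left hcc (inv_nonneg.mpr hε.le)
  linarith
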